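/- arXiv:2010.12645 — 2 statements merged into one kernel-verified Lean document; each statement's English description precedes it below -/
import Mathlib

section
/- Let S and A be finite sets, γ ∈ [0,1), d₀ a probability distribution on S, and let M and M' be two MDPs sharing S, A, γ, d₀, with transition functions P, P' and mean reward functions R, R' bounded in absolute value by Rmax. If for all s ∈ S and a ∈ A, |R(s,a) − R'(s,a)| ≤ ε_R, then for every policy π, (1−γ)·|ρ(π, M) − ρ(π, M')| ≤ Rmax · ∑_{s∈S} |d^π(s, M) − d^π(s, M')| + ε_R. -/
open scoped BigOperators

/-- The distribution over states at time `t` when running policy `pol` in an MDP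
with transition function `P` and start-state distribution `d0`. -/
noncomputable def stateDist {S A : Type*} [Fintype S] [Fintype A]
    (P : S → A → S → ℝ) (pol : S → A → ℝ) (d0 : S → ℝ) : ℕ → S → ℝ
  | 0 => d0
  | (t + 1) => fun s' => ∑ s : S, ∑ a : A, stateDist P pol d0 t s * pol s a * P s a s'

/-- The performance `ρ(π, M) = ∑_{t=0}^∞ γ^t E[R(S_t, A_t)]`. -/
noncomputable def perf {S A : Type*} [Fintype S] [Fintype A]
    (P : S → A → S → ℝ) (R : S → A → ℝ) (pol : S → A → ℝ)
    (d0 : S → ℝ) (γ : ℝ) : ℝ :=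
  ∑' t : ℕ, γ ^ t * ∑ s : S, stateDist P pol d0 t s * ∑ a : A, pol s a * R s a

/-- `P s a : S → ℝ` is a probability distribution over next states for each `(s, a)`. -/
def IsTransition {S A : Type*} [Fintype S] (P : S → A → S → ℝ) : Prop :=
  ∀ s a, (∀ s', 0 ≤ P s a s') ∧ ∑ s' : S, P s a s' = 1

/-- `pol s : A → ℝ` is a probability distribution over actions for each state `s`. -/
def IsPolicy {S A : Type*} [Fintype A] (pol : S → A → ℝ) : Prop :=
  ∀ s, (∀ a, 0 ≤ pol s a) ∧ ∑ a : A, pol s a = 1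

/-- `d0` is a probability distribution over states. -/
def IsDist {S : Type*} [Fintype S] (d0 : S → ℝ) : Prop :=
  (∀ s, 0 ≤ d0 s) ∧ ∑ s : S, d0 s = 1


/-- The discounted state occupancy `d^π(s, M) := (1−γ) ∑_{t=0}^∞ γ^t Pr(S_t = s)`. -/
noncomputable def occupancy {S A : Type*} [Fintype S] [Fintype A]
    (P : S → A → S → ℝ) (pol : S → A → ℝ) (d0 : S → ℝ) (γ : ℝ) (s : S) : ℝ :=
  (1 - γ) * ∑' t : ℕ, γ ^ t * stateDist P pol d0 t s

/-!
Multiplying by `1 - γ` turns the performance into the occupancy-weighted average of the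
policy's expected one-step reward `r_π(s) = ∑ₐ π(a|s) R(s,a)`. Hence
`(1-γ)(ρ - ρ') = ∑ₛ (d - d')(s) r_π(s) + ∑ₛ d'(s) (r_π - r'_π)(s)`: the first sum is at most
`Rmax ∑ₛ |d - d'|(s)` because `|r_π| ≤ Rmax`, and the second at most `ε_R` because `d'` is a
probability distribution.
-/

open Finset

theorem IsDist.le_one {S : Type*} [Fintype S] {d : S → ℝ} (hd : IsDist d) (s : S) : d s ≤ 1 :=
  hd.2 ▸ single_le_sum (fun i _ => hd.1 i) (mem_univ s)

theorem IsDist.abs_sum_mul_le {S : Type*} [Fintype S] {w f : S → ℝ} {C : ℝ} (hw : IsDist w)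
    (hf : ∀ s, |f s| ≤ C) : |∑ s, w s * f s| ≤ C :=
  calc |∑ s, w s * f s| ≤ ∑ s, w s * |f s| := by
        simpa only [abs_mul, abs_of_nonneg (hw.1 _)] using
          abs_sum_le_sum_abs (fun s => w s * f s) univ
    _ ≤ ∑ s, w s * C := sum_le_sum fun s _ => mul_le_mul_of_nonneg_left (hf s) (hw.1 s)
    _ = C := by rw [← sum_mul, hw.2, one_mul]

theorem abs_sum_mul_sub_sum_mul_le {S : Type*} [Fintype S] {d d' r r' : S → ℝ} {C ε : ℝ}
    (hd' : IsDist d') (hr : ∀ s, |r s| ≤ C) (hrr' : ∀ s, |r s - r' s| ≤ ε) :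
    |∑ s, d s * r s - ∑ s, d' s * r' s| ≤ C * ∑ s, |d s - d' s| + ε := by
  have hsplit : ∑ s, d s * r s - ∑ s, d' s * r' s
      = ∑ s, (d s - d' s) * r s + ∑ s, d' s * (r s - r' s) := by
    simp only [← sum_sub_distrib, ← sum_add_distrib]
    exact sum_congr rfl fun s _ => by ring
  have hfirst : |∑ s, (d s - d' s) * r s| ≤ C * ∑ s, |d s - d' s| :=
    calc |∑ s, (d s - d' s) * r s| ≤ ∑ s, |d s - d' s| * |r s| := by
          simpa only [abs_mul] using abs_sum_le_sum_abs (fun s => (d s - d' s) * r s) univ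
      _ ≤ ∑ s, |d s - d' s| * C :=
          sum_le_sum fun s _ => mul_le_mul_of_nonneg_left (hr s) (abs_nonneg _)
      _ = C * ∑ s, |d s - d' s| := by rw [← sum_mul, mul_comm]
  rw [hsplit]
  exact (abs_add_le _ _).trans (add_le_add hfirst (hd'.abs_sum_mul_le hrr'))

section MDP

variable {S A : Type*} [Fintype S] [Fintype A] {P : S → A → S → ℝ} {pol : S → A → ℝ}
  {d0 : S → ℝ} {γ : ℝ}

theorem isDist_stateDist (hP : IsTransition P) (hpol : IsPolicy pol) (hd0 : IsDist d0) :
    ∀ t, IsDist (stateDist P pol d0 t)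
  | 0 => hd0
  | t + 1 => by
    obtain ⟨hnonneg, hsum⟩ := isDist_stateDist hP hpol hd0 t
    refine ⟨fun s' => sum_nonneg fun s _ => sum_nonneg fun a _ =>
      mul_nonneg (mul_nonneg (hnonneg s) ((hpol s).1 a)) ((hP s a).1 s'), ?_⟩
    show ∑ s', ∑ s, ∑ a, stateDist P pol d0 t s * pol s a * P s a s' = 1
    calc ∑ s', ∑ s, ∑ a, stateDist P pol d0 t s * pol s a * P s a s'
        = ∑ s, ∑ a, stateDist P pol d0 t s * pol s a * ∑ s', P s a s' := by
          rw [sum_comm]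
          exact sum_congr rfl fun s _ => by rw [sum_comm]; simp only [mul_sum]
      _ = 1 := by simp only [(hP _ _).2, mul_one, ← mul_sum, (hpol _).2, hsum]

theorem summable_discounted_stateDist (hγ0 : 0 ≤ γ) (hγ1 : γ < 1) (hP : IsTransition P)
    (hpol : IsPolicy pol) (hd0 : IsDist d0) (s : S) :
    Summable fun t => γ ^ t * stateDist P pol d0 t s :=
  have hdist := isDist_stateDist hP hpol hd0
  (summable_geometric_of_lt_one hγ0 hγ1).of_nonneg_of_le
    (fun t => mul_nonneg (pow_nonneg hγ0 t) ((hdist t).1 s))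
    (fun t => mul_le_of_le_one_right (pow_nonneg hγ0 t) ((hdist t).le_one s))

theorem isDist_occupancy (hγ0 : 0 ≤ γ) (hγ1 : γ < 1) (hP : IsTransition P)
    (hpol : IsPolicy pol) (hd0 : IsDist d0) : IsDist (occupancy P pol d0 γ) := by
  have hdist := isDist_stateDist hP hpol hd0
  refine ⟨fun s => mul_nonneg (sub_nonneg.2 hγ1.le)
    (tsum_nonneg fun t => mul_nonneg (pow_nonneg hγ0 t) ((hdist t).1 s)), ?_⟩
  simp only [occupancy, ← mul_sum]
  rw [← Summable.tsum_finsetSum fun s _ => summable_discounted_stateDist hγ0 hγ1 hP hpol hd0 s]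
  simp_rw [← mul_sum, (hdist _).2, mul_one, tsum_geometric_of_lt_one hγ0 hγ1]
  exact mul_inv_cancel₀ (sub_ne_zero.2 hγ1.ne')

theorem one_sub_mul_perf (hγ0 : 0 ≤ γ) (hγ1 : γ < 1) (hP : IsTransition P)
    (hpol : IsPolicy pol) (hd0 : IsDist d0) (R : S → A → ℝ) :
    (1 - γ) * perf P R pol d0 γ =
      ∑ s, occupancy P pol d0 γ s * ∑ a, pol s a * R s a := by
  have hperf : perf P R pol d0 γ
      = ∑ s, (∑' t, γ ^ t * stateDist P pol d0 t s) * ∑ a, pol s a * R s a := by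
    rw [perf]
    simp_rw [← tsum_mul_right, mul_sum (s := univ (α := S)), ← mul_assoc]
    exact Summable.tsum_finsetSum fun s _ =>
      (summable_discounted_stateDist hγ0 hγ1 hP hpol hd0 s).mul_right _
  simp only [hperf, occupancy, mul_sum, mul_assoc]

end MDP

theorem perf_diff_occupancy_bound_general
    {S A : Type*} [Fintype S] [Fintype A]
    (γ Rmax εR : ℝ) (hγ0 : 0 ≤ γ) (hγ1 : γ < 1)
    (d0 : S → ℝ) (hd0 : IsDist d0)
    (P P' : S → A → S → ℝ) (R R' : S → A → ℝ)
    (hP : IsTransition P) (hP' : IsTransition P')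
    (hR : ∀ s a, |R s a| ≤ Rmax)
    (hRclose : ∀ s a, |R s a - R' s a| ≤ εR)
    (pol : S → A → ℝ) (hpol : IsPolicy pol) :
    (1 - γ) * |perf P R pol d0 γ - perf P' R' pol d0 γ| ≤
      Rmax * ∑ s : S, |occupancy P pol d0 γ s - occupancy P' pol d0 γ s| + εR := by
  have hreward (s : S) : |∑ a, pol s a * R s a| ≤ Rmax := IsDist.abs_sum_mul_le (hpol s) (hR s)
  have hreward_diff (s : S) : |∑ a, pol s a * R s a - ∑ a, pol s a * R' s a| ≤ εR := by
    rw [← sum_sub_distrib]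
    simpa only [mul_sub] using IsDist.abs_sum_mul_le (hpol s) (hRclose s)
  rw [← abs_of_nonneg (sub_nonneg.2 hγ1.le), ← abs_mul, mul_sub,
    one_sub_mul_perf hγ0 hγ1 hP hpol hd0, one_sub_mul_perf hγ0 hγ1 hP' hpol hd0]
  exact abs_sum_mul_sub_sum_mul_le (isDist_occupancy hγ0 hγ1 hP' hpol hd0) hreward hreward_diff

/-- If the mean rewards of `M` and `M'` are within `εR`, then
`(1−γ)·|ρ(π,M) − ρ(π,M')| ≤ Rmax·∑_s |d^π(s,M) − d^π(s,M')| + εR`. -/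
theorem perf_diff_occupancy_bound
    {S A : Type*} [Fintype S] [Fintype A]
    (γ Rmax εR : ℝ) (hγ0 : 0 ≤ γ) (hγ1 : γ < 1)
    (d0 : S → ℝ) (hd0 : IsDist d0)
    (P P' : S → A → S → ℝ) (R R' : S → A → ℝ)
    (hP : IsTransition P) (hP' : IsTransition P')
    (hR : ∀ s a, |R s a| ≤ Rmax) (hR' : ∀ s a, |R' s a| ≤ Rmax)
    (hRclose : ∀ s a, |R s a - R' s a| ≤ εR)
    (pol : S → A → ℝ) (hpol : IsPolicy pol) :
    (1 - γ) * |perf P R pol d0 γ - perf P' R' pol d0 γ| ≤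
      Rmax * ∑ s : S, |occupancy P pol d0 γ s - occupancy P' pol d0 γ s| + εR :=
  perf_diff_occupancy_bound_general γ Rmax εR hγ0 hγ1 d0 hd0 P P' R R' hP hP' hR hRclose pol hpol
end

section
/- Let S and A be finite sets, γ ∈ [0,1), d₀ a probability distribution on S, and let M and M' be two MDPs sharing S, A, γ, d₀ with transition functions P and P'. For a policy π, let P^π ∈ ℝ^{|S|×|S|} be the matrix with entries P^π(s', s) := ∑_{a∈A} π(a|s)·P(s'|s,a), and define P'^π analogously from P'. Let d^π(·, M) ∈ ℝ^{|S|} denote the vector of discounted state occupancies under P. Then ∑_{s∈S} |d^π(s, M) − d^π(s, M')| ≤ γ·(1−γ)^{-1} · ‖(P^π − P'^π) d^π(·, M)‖₁. -/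
open scoped BigOperators

/-- The policy-averaged transition matrix `P^π(s', s) := ∑_a π(a|s)·P(s'|s,a)`. -/
noncomputable def polMatrix {S A : Type*} [Fintype A]
    (P : S → A → S → ℝ) (pol : S → A → ℝ) : Matrix S S ℝ :=
  Matrix.of fun s' s => ∑ a : A, pol s a * P s a s'

/-!
The column-stochastic matrix `P^π` does not increase `ℓ¹` norms. Hence `‖x_t‖₁ ≤ ‖d₀‖₁` for the
state distributions `x_{t+1} = P^π x_t`, the series defining the occupancy converges, and the
occupancy is the fixed point of the flow equation `d = (1 - γ) d₀ + γ P^π d`. Subtracting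
the equations for `M` and `M'` gives `d - d' = γ P'^π (d - d') + γ (P^π - P'^π) d`, so
`‖d - d'‖₁ ≤ γ ‖d - d'‖₁ + γ ‖(P^π - P'^π) d‖₁`.
-/

open Finset Matrix

namespace Matrix

variable {n : Type*} [Fintype n] [DecidableEq n] {M : Matrix n n ℝ}

theorem sum_abs_mulVec_le_of_mem_colStochastic (hM : M ∈ colStochastic ℝ n) (x : n → ℝ) :
    ∑ i, |(M *ᵥ x) i| ≤ ∑ i, |x i| := by
  have hpointwise (i : n) : |(M *ᵥ x) i| ≤ (M *ᵥ fun j => |x j|) i := by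
    simp only [mulVec, dotProduct]
    refine (abs_sum_le_sum_abs _ _).trans_eq (sum_congr rfl fun j _ => ?_)
    rw [abs_mul, abs_of_nonneg (nonneg_of_mem_colStochastic hM)]
  exact (sum_le_sum fun i _ => hpointwise i).trans_eq (sum_mulVec_of_mem_colStochastic hM)

theorem sum_abs_le_of_eq_smul_mulVec_add {γ : ℝ} (hγ0 : 0 ≤ γ) (hγ1 : γ < 1)
    (hM : M ∈ colStochastic ℝ n) {e w : n → ℝ} (he : e = γ • (M *ᵥ e) + γ • w) :
    ∑ i, |e i| ≤ γ * (1 - γ)⁻¹ * ∑ i, |w i| := by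
  have hle : ∑ i, |e i| ≤ γ * ∑ i, |e i| + γ * ∑ i, |w i| :=
    calc ∑ i, |e i| ≤ ∑ i, (γ * |(M *ᵥ e) i| + γ * |w i|) := sum_le_sum fun i _ => by
          rw [congrFun he i]
          simpa [abs_mul, abs_of_nonneg hγ0] using abs_add_le (γ * (M *ᵥ e) i) (γ * w i)
      _ ≤ γ * ∑ i, |e i| + γ * ∑ i, |w i| := by
          rw [sum_add_distrib, ← mul_sum, ← mul_sum]
          gcongr γ * ?_ + _
          exact sum_abs_mulVec_le_of_mem_colStochastic hM e
  rw [mul_comm γ, mul_assoc, le_inv_mul_iff₀ (by linarith)]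
  linarith

end Matrix

section

variable {S A : Type*} [Fintype S] [Fintype A] {P : S → A → S → ℝ} {pol : S → A → ℝ}
  {d0 : S → ℝ} {γ : ℝ}

theorem polMatrix_mem_colStochastic [DecidableEq S] (hP : IsTransition P) (hpol : IsPolicy pol) :
    polMatrix P pol ∈ colStochastic ℝ S := by
  refine mem_colStochastic_iff_sum.2
    ⟨fun s' s => sum_nonneg fun a _ => mul_nonneg ((hpol s).1 a) ((hP s a).1 s'), fun s => ?_⟩
  simp only [polMatrix, of_apply]
  rw [sum_comm]
  simp only [← mul_sum, (hP _ _).2, mul_one, (hpol s).2]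

theorem stateDist_succ (P : S → A → S → ℝ) (pol : S → A → ℝ) (d0 : S → ℝ) (t : ℕ) :
    stateDist P pol d0 (t + 1) = polMatrix P pol *ᵥ stateDist P pol d0 t := by
  ext s'
  simp only [stateDist, mulVec, dotProduct, polMatrix, of_apply, sum_mul]
  exact sum_congr rfl fun s _ => sum_congr rfl fun a _ => by ring

theorem sum_abs_stateDist_le [DecidableEq S] (hM : polMatrix P pol ∈ colStochastic ℝ S)
    (t : ℕ) : ∑ s, |stateDist P pol d0 t s| ≤ ∑ s, |d0 s| := by
  induction t with
  | zero => rfl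
  | succ t ih =>
    rw [stateDist_succ]
    exact (sum_abs_mulVec_le_of_mem_colStochastic hM _).trans ih

theorem summable_geometric_mul_stateDist [DecidableEq S] (hγ0 : 0 ≤ γ) (hγ1 : γ < 1)
    (hM : polMatrix P pol ∈ colStochastic ℝ S) (s : S) :
    Summable fun t => γ ^ t * stateDist P pol d0 t s := by
  refine .of_norm_bounded
    ((summable_geometric_of_lt_one hγ0 hγ1).mul_right (∑ s, |d0 s|)) fun t => ?_
  rw [Real.norm_eq_abs, abs_mul, abs_of_nonneg (pow_nonneg hγ0 t)]
  gcongr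
  exact (single_le_sum (fun s _ => abs_nonneg (stateDist P pol d0 t s)) (mem_univ s)).trans
    (sum_abs_stateDist_le hM t)

theorem occupancy_eq_smul_add_smul_mulVec [DecidableEq S] (hγ0 : 0 ≤ γ) (hγ1 : γ < 1)
    (hM : polMatrix P pol ∈ colStochastic ℝ S) :
    occupancy P pol d0 γ = (1 - γ) • d0 + γ • (polMatrix P pol *ᵥ occupancy P pol d0 γ) := by
  let D : S → ℝ := fun s => ∑' t, γ ^ t * stateDist P pol d0 t s
  have hD (s : S) : HasSum (fun t => γ ^ t * stateDist P pol d0 t s) (D s) :=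
    (summable_geometric_mul_stateDist hγ0 hγ1 hM s).hasSum
  have hocc : occupancy P pol d0 γ = (1 - γ) • D := rfl
  ext s'
  have htail : HasSum (fun t => γ ^ (t + 1) * stateDist P pol d0 (t + 1) s')
      (γ * (polMatrix P pol *ᵥ D) s') := by
    refine ((hasSum_sum fun s _ => (hD s).mul_left (polMatrix P pol s' s)).mul_left γ).congr_fun
      fun t => ?_
    simp only [stateDist_succ, mulVec, dotProduct, mul_sum, pow_succ]
    exact sum_congr rfl fun s _ => by ring
  have hDs : D s' = d0 s' + γ * (polMatrix P pol *ᵥ D) s' := by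
    rw [← (hD s').tsum_eq, (hD s').summable.tsum_eq_zero_add, htail.tsum_eq]
    simp [stateDist]
  simp [hocc, mulVec_smul, hDs]
  ring

theorem occupancy_sub_occupancy_eq [DecidableEq S] {P' : S → A → S → ℝ} (hγ0 : 0 ≤ γ)
    (hγ1 : γ < 1) (hM : polMatrix P pol ∈ colStochastic ℝ S)
    (hM' : polMatrix P' pol ∈ colStochastic ℝ S) :
    occupancy P pol d0 γ - occupancy P' pol d0 γ =
      γ • (polMatrix P' pol *ᵥ (occupancy P pol d0 γ - occupancy P' pol d0 γ)) +
        γ • ((polMatrix P pol - polMatrix P' pol) *ᵥ occupancy P pol d0 γ) := by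
  rw [mulVec_sub, sub_mulVec]
  conv_lhs => rw [occupancy_eq_smul_add_smul_mulVec hγ0 hγ1 hM,
    occupancy_eq_smul_add_smul_mulVec hγ0 hγ1 hM']
  module

end

theorem occupancy_diff_matrix_bound_general
    {S A : Type*} [Fintype S] [Fintype A]
    (γ : ℝ) (hγ0 : 0 ≤ γ) (hγ1 : γ < 1)
    (d0 : S → ℝ)
    (P P' : S → A → S → ℝ)
    (hP : IsTransition P) (hP' : IsTransition P')
    (pol : S → A → ℝ) (hpol : IsPolicy pol) :
    ∑ s : S, |occupancy P pol d0 γ s - occupancy P' pol d0 γ s| ≤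
      γ * (1 - γ)⁻¹ *
        ∑ s' : S, |((polMatrix P pol - polMatrix P' pol).mulVec
          (occupancy P pol d0 γ)) s'| := by
  classical
  have hM' := polMatrix_mem_colStochastic hP' hpol
  exact sum_abs_le_of_eq_smul_mulVec_add hγ0 hγ1 hM'
    (occupancy_sub_occupancy_eq hγ0 hγ1 (polMatrix_mem_colStochastic hP hpol) hM')

/-- The L1 distance between the discounted state occupancies of two MDPs `M` and `M'`
(sharing everything but the transition functions `P` and `P'`) is bounded by
`γ·(1−γ)⁻¹·‖(P^π − P'^π) d^π(·, M)‖₁`. -/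
theorem occupancy_diff_matrix_bound
    {S A : Type*} [Fintype S] [Fintype A]
    (γ : ℝ) (hγ0 : 0 ≤ γ) (hγ1 : γ < 1)
    (d0 : S → ℝ) (hd0 : IsDist d0)
    (P P' : S → A → S → ℝ)
    (hP : IsTransition P) (hP' : IsTransition P')
    (pol : S → A → ℝ) (hpol : IsPolicy pol) :
    ∑ s : S, |occupancy P pol d0 γ s - occupancy P' pol d0 γ s| ≤
      γ * (1 - γ)⁻¹ *
        ∑ s' : S, |((polMatrix P pol - polMatrix P' pol).mulVec
          (occupancy P pol d0 γ)) s'| :=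
  occupancy_diff_matrix_bound_general γ hγ0 hγ1 d0 P P' hP hP' pol hpol
end
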